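/- arXiv:2311.07276 — 9 statements merged into one kernel-verified Lean document; each statement's English description precedes it below -/
import Mathlib

section
/- Let D be a symmetric n×n real matrix with 0 ⪯ D ⪯ (1/(1-τρ))·I, where τ > 0, ρ ≥ 0 and τρ < 1. Then D can be written as D = Π_{R(D)} (I + τA)^{-1} Π_{R(D)}, where Π_{R(D)} is the orthogonal projection onto the range of D, and A is a symmetric matrix satisfying A + ρI ⪰ 0 and range(A) ⊆ range(D). -/
/-!
Everything is a function of `D` in the continuous functional calculus. On an eigenvalue `λ ≠ 0`
of `D` give `A` the eigenvalue `(λ⁻¹ - 1) / τ`, so that `(1 + τA)⁻¹` has eigenvalue `λ` there;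
on the kernel of `D` give `A` the eigenvalue `0`, so that `(1 + τA)⁻¹` is the identity there and
is annihilated by the compression with `P`. The bound `λ ≤ 1 / (1 - τρ)` is exactly
`(λ⁻¹ - 1) / τ ≥ -ρ`.
-/

open scoped MatrixOrder ComplexOrder

namespace Matrix

variable {n 𝕜 : Type*} [Fintype n] [DecidableEq n] [RCLike 𝕜]

@[fun_prop]
lemma continuousOn_spectrum_real (A : Matrix n n 𝕜) (f : ℝ → ℝ) :
    ContinuousOn f (spectrum ℝ A) :=
  A.finite_real_spectrum.continuousOn f

lemma cfc_mul_cfc (A : Matrix n n 𝕜) (f g : ℝ → ℝ) :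
    cfc f A * cfc g A = cfc (fun x => f x * g x) A :=
  (cfc_mul f g A).symm

lemma inv_cfc {A : Matrix n n 𝕜} (hA : IsSelfAdjoint A) {f : ℝ → ℝ}
    (hf : ∀ x ∈ spectrum ℝ A, f x ≠ 0) : (cfc f A)⁻¹ = cfc (fun x => (f x)⁻¹) A :=
  inv_eq_right_inv <| by
    rw [cfc_mul_cfc, cfc_congr fun x hx => mul_inv_cancel₀ (hf x hx), cfc_const_one ℝ A]

lemma inv_one_add_smul_cfc {A : Matrix n n 𝕜} (hA : IsSelfAdjoint A) (c : ℝ) {f : ℝ → ℝ}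
    (hf : ∀ x ∈ spectrum ℝ A, 1 + c * f x ≠ 0) :
    (1 + c • cfc f A)⁻¹ = cfc (fun x => (1 + c * f x)⁻¹) A := by
  rw [← cfc_const_mul c f A, ← map_one (algebraMap ℝ (Matrix n n 𝕜)), ← cfc_const_add 1 _ A]
  exact inv_cfc hA hf

lemma range_mulVecLin_cfc_le (A : Matrix n n 𝕜) {f : ℝ → ℝ} (hf : f 0 = 0) :
    LinearMap.range (cfc f A).mulVecLin ≤ LinearMap.range A.mulVecLin := by
  by_cases hA : IsSelfAdjoint A
  · have hfactor : cfc f A = A * cfc (fun x => f x / x) A := by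
      calc cfc f A = cfc (fun x => x * (f x / x)) A := cfc_congr fun x _ => by
            rcases eq_or_ne x 0 with rfl | hx
            · simp [hf]
            · field_simp
        _ = A * cfc (fun x => f x / x) A := by rw [← cfc_mul_cfc, cfc_id' ℝ A]
    rw [hfactor, mulVecLin_mul]
    exact LinearMap.range_comp_le_range _ _
  · simp [cfc_apply_of_not_predicate A hA]

lemma nonneg_of_mem_spectrum_of_posSemidef {A : Matrix n n 𝕜} (h : A.PosSemidef) {x : ℝ}
    (hx : x ∈ spectrum ℝ A) : 0 ≤ x :=
  (StarOrderedRing.nonneg_iff_spectrum_nonneg A h.isHermitian).mp h.nonneg x hx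

lemma le_of_mem_spectrum_of_posSemidef_smul_one_sub {A : Matrix n n 𝕜} (hA : A.IsHermitian)
    {c : ℝ} (h : (c • 1 - A).PosSemidef) {x : ℝ} (hx : x ∈ spectrum ℝ A) : x ≤ c := by
  have hcfc : c • 1 - A = cfc (fun x => c - x) A := by
    rw [cfc_sub .., cfc_const c A, cfc_id' ℝ A, Algebra.algebraMap_eq_smul_one]
  rw [hcfc, ← nonneg_iff_posSemidef, cfc_nonneg_iff _ A] at h
  exact sub_nonneg.mp (h x hx)

/-- For self-adjoint `A`, the orthogonal projection onto the range of `A`. -/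
noncomputable def rangeProj (A : Matrix n n 𝕜) : Matrix n n 𝕜 :=
  cfc (fun x : ℝ => if x = 0 then 0 else 1) A

lemma isSelfAdjoint_rangeProj (A : Matrix n n 𝕜) : IsSelfAdjoint (rangeProj A) :=
  cfc_predicate _ A

lemma isIdempotentElem_rangeProj (A : Matrix n n 𝕜) : IsIdempotentElem (rangeProj A) := by
  rw [IsIdempotentElem, rangeProj, cfc_mul_cfc]
  exact cfc_congr fun x _ => by split_ifs <;> simp

lemma rangeProj_mul_self {A : Matrix n n 𝕜} (hA : IsSelfAdjoint A) : rangeProj A * A = A := by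
  calc rangeProj A * A = cfc (fun x : ℝ => (if x = 0 then 0 else 1) * x) A := by
        rw [rangeProj, ← cfc_mul_cfc, cfc_id' ℝ A]
    _ = A := by
        rw [cfc_congr fun x _ => ?_, cfc_id' ℝ A]
        split_ifs with hx <;> simp [hx]

lemma range_rangeProj {A : Matrix n n 𝕜} (hA : IsSelfAdjoint A) :
    LinearMap.range (rangeProj A).mulVecLin = LinearMap.range A.mulVecLin := by
  refine le_antisymm (range_mulVecLin_cfc_le A (if_pos rfl)) ?_
  conv_lhs => rw [← rangeProj_mul_self hA, mulVecLin_mul]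
  exact LinearMap.range_comp_le_range _ _

end Matrix

open Matrix

theorem stmt_0_general {n : ℕ} (τ ρ : ℝ) (hτ : 0 < τ) (hρ : 0 ≤ ρ)
    (D : Matrix (Fin n) (Fin n) ℝ)
    (hD0 : D.PosSemidef)
    (hD1 : ((1 / (1 - τ * ρ)) • (1 : Matrix (Fin n) (Fin n) ℝ) - D).PosSemidef) :
    ∃ A P : Matrix (Fin n) (Fin n) ℝ,
      A.IsSymm ∧ (A + ρ • (1 : Matrix (Fin n) (Fin n) ℝ)).PosSemidef ∧
      LinearMap.range A.mulVecLin ≤ LinearMap.range D.mulVecLin ∧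
      P.IsSymm ∧ P * P = P ∧
      LinearMap.range P.mulVecLin = LinearMap.range D.mulVecLin ∧
      D = P * ((1 : Matrix (Fin n) (Fin n) ℝ) + τ • A)⁻¹ * P := by
  have hD : IsSelfAdjoint D := hD0.isHermitian
  let a : ℝ → ℝ := fun x => if x = 0 then 0 else (x⁻¹ - 1) / τ
  have hshift : ∀ x ∈ spectrum ℝ D, 0 ≤ a x + ρ := fun x hx => by
    rcases (nonneg_of_mem_spectrum_of_posSemidef hD0 hx).eq_or_lt with rfl | hx0
    · simpa [a] using hρ
    have hinv : 1 - τ * ρ ≤ x⁻¹ :=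
      le_inv_of_le_inv₀ hx0 (one_div (1 - τ * ρ) ▸
        le_of_mem_spectrum_of_posSemidef_smul_one_sub hD0.isHermitian hD1 hx)
    simp only [a, if_neg hx0.ne']
    rw [div_add' _ _ _ hτ.ne']
    exact div_nonneg (by linarith) hτ.le
  have hone_add : ∀ x, 1 + τ * a x = if x = 0 then 1 else x⁻¹ := fun x => by
    simp only [a]
    split_ifs
    · simp
    · field_simp; ring
  have hresolvent : ((1 : Matrix (Fin n) (Fin n) ℝ) + τ • cfc a D)⁻¹
      = cfc (fun x : ℝ => if x = 0 then 1 else x) D := by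
    rw [inv_one_add_smul_cfc hD τ fun x _ => by rw [hone_add]; split_ifs with hx <;> simp [hx]]
    exact cfc_congr fun x _ => by simp only [hone_add]; split_ifs <;> simp
  refine ⟨cfc a D, rangeProj D, isHermitian_iff_isSymm.mp (cfc_predicate a D), ?_,
    range_mulVecLin_cfc_le D (if_pos rfl), isHermitian_iff_isSymm.mp (isSelfAdjoint_rangeProj D),
    isIdempotentElem_rangeProj D, range_rangeProj hD, ?_⟩
  · rw [← nonneg_iff_posSemidef, ← Algebra.algebraMap_eq_smul_one, ← cfc_add_const ρ a D]
    exact cfc_nonneg hshift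
  · rw [hresolvent, rangeProj, cfc_mul_cfc, cfc_mul_cfc]
    refine (cfc_id' ℝ D).symm.trans (cfc_congr fun x _ => ?_)
    split_ifs with hx <;> simp [hx]

/-- A symmetric matrix `D` with `0 ⪯ D ⪯ (1/(1-τρ))·I` can be written as
`D = P (I + τA)⁻¹ P` where `P` is the orthogonal projection onto the range of `D`
and `A` is symmetric with `A + ρI ⪰ 0` and `range(A) ⊆ range(D)`. -/
theorem stmt_0 {n : ℕ} (τ ρ : ℝ) (hτ : 0 < τ) (hρ : 0 ≤ ρ) (hτρ : τ * ρ < 1)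
    (D : Matrix (Fin n) (Fin n) ℝ) (hDsymm : D.IsSymm)
    (hD0 : D.PosSemidef)
    (hD1 : ((1 / (1 - τ * ρ)) • (1 : Matrix (Fin n) (Fin n) ℝ) - D).PosSemidef) :
    ∃ A P : Matrix (Fin n) (Fin n) ℝ,
      A.IsSymm ∧ (A + ρ • (1 : Matrix (Fin n) (Fin n) ℝ)).PosSemidef ∧
      LinearMap.range A.mulVecLin ≤ LinearMap.range D.mulVecLin ∧
      P.IsSymm ∧ P * P = P ∧
      LinearMap.range P.mulVecLin = LinearMap.range D.mulVecLin ∧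
      D = P * ((1 : Matrix (Fin n) (Fin n) ℝ) + τ • A)⁻¹ * P :=
  stmt_0_general τ ρ hτ hρ D hD0 hD1
end

section
/- Let L be a linear subspace of ℝⁿ with orthogonal projection Π_L, and let B be a symmetric n×n matrix with I + B positive definite. Then Π_L (I + Π_L B Π_L)^{-1} Π_L ⪯ (I + B)^{-1}. -/
/-!
Write `A = 1 + B` and `M = 1 + P B P`. Since `P` is idempotent, `M P = P A P`, so
`Q = P M⁻¹ P` satisfies `Q A Q = Q`. Then `S = A⁻¹ - Q` satisfies `S = S A S = Sᴴ A S ⪰ 0`.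
Invertibility of `M` comes from `M = (1 - P)ᴴ (1 - P) + Pᴴ A P ≻ 0`.
-/

open Matrix

namespace Matrix

variable {ι : Type*} [Fintype ι]

theorem star_dotProduct_conjTranspose_mul_mul_mulVec {R : Type*} [CommSemiring R] [StarRing R]
    (A D : Matrix ι ι R) (x : ι → R) :
    star x ⬝ᵥ ((Dᴴ * A * D) *ᵥ x) = star (D *ᵥ x) ⬝ᵥ (A *ᵥ (D *ᵥ x)) := by
  simp only [star_mulVec, dotProduct_mulVec, vecMul_vecMul, ← mulVec_mulVec]

variable [DecidableEq ι]

theorem mul_nonsing_inv_mul_mul_mul_self {R : Type*} [CommRing R] {A M P : Matrix ι ι R}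
    (hM : IsUnit M) (hP : IsIdempotentElem P) (hMP : M * P = P * A * P) :
    P * M⁻¹ * P * A * (P * M⁻¹ * P) = P * M⁻¹ * P := by
  have hM' : M⁻¹ * M = 1 := nonsing_inv_mul M ((isUnit_iff_isUnit_det M).mp hM)
  calc P * M⁻¹ * P * A * (P * M⁻¹ * P) = P * M⁻¹ * (P * A * P) * M⁻¹ * P := by
        simp only [Matrix.mul_assoc]
    _ = P * (M⁻¹ * M) * (P * M⁻¹ * P) := by rw [← hMP]; simp only [Matrix.mul_assoc]
    _ = P * M⁻¹ * P := by rw [hM', Matrix.mul_one, ← Matrix.mul_assoc, ← Matrix.mul_assoc, hP.eq]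

theorem PosDef.posSemidef_inv_sub {K : Type*} [Field K] [PartialOrder K] [StarRing K]
    {A Q : Matrix ι ι K} (hA : A.PosDef) (hQ : Q.IsHermitian) (hQAQ : Q * A * Q = Q) :
    (A⁻¹ - Q).PosSemidef := by
  have hAdet : IsUnit A.det := (isUnit_iff_isUnit_det A).mp hA.isUnit
  have hsq : A⁻¹ - Q = (A⁻¹ - Q)ᴴ * A * (A⁻¹ - Q) := by
    rw [conjTranspose_sub, hQ.eq, hA.isHermitian.inv.eq, Matrix.sub_mul, Matrix.sub_mul,
      nonsing_inv_mul A hAdet, Matrix.one_mul, Matrix.mul_sub, hQAQ,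
      Matrix.mul_assoc Q, mul_nonsing_inv A hAdet, Matrix.mul_one]
    abel
  rw [hsq]
  exact hA.posSemidef.conjTranspose_mul_mul_same _

open scoped ComplexOrder

variable {𝕜 : Type*} [RCLike 𝕜]

theorem PosDef.one_sub_conjTranspose_mul_add {A : Matrix ι ι 𝕜} (hA : A.PosDef)
    (P : Matrix ι ι 𝕜) : ((1 - P)ᴴ * (1 - P) + Pᴴ * A * P).PosDef := by
  have hI : (1 : Matrix ι ι 𝕜).PosDef := .one
  rw [← Matrix.mul_one (1 - P)ᴴ]
  refine .of_dotProduct_mulVec_pos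
    ((hI.posSemidef.conjTranspose_mul_mul_same _).isHermitian.add
      (hA.posSemidef.conjTranspose_mul_mul_same P).isHermitian) fun x hx => ?_
  rw [add_mulVec, dotProduct_add, star_dotProduct_conjTranspose_mul_mul_mulVec,
    star_dotProduct_conjTranspose_mul_mul_mulVec]
  by_cases hPx : P *ᵥ x = 0
  · have hx' : (1 - P) *ᵥ x = x := by rw [sub_mulVec, one_mulVec, hPx, sub_zero]
    rw [hx', hPx, mulVec_zero, dotProduct_zero, add_zero]
    exact hI.dotProduct_mulVec_pos hx
  · exact add_pos_of_nonneg_of_pos (hI.posSemidef.dotProduct_mulVec_nonneg _)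
      (hA.dotProduct_mulVec_pos hPx)

theorem PosDef.posSemidef_inv_sub_compression {B P : Matrix ι ι 𝕜} (hB : (1 + B).PosDef)
    (hP : P.IsHermitian) (hPP : IsIdempotentElem P) :
    ((1 + B)⁻¹ - P * (1 + P * B * P)⁻¹ * P).PosSemidef := by
  have hM : (1 + P * B * P).PosDef := by
    convert hB.one_sub_conjTranspose_mul_add P using 1
    rw [conjTranspose_sub, conjTranspose_one, hP.eq]
    simp only [Matrix.sub_mul, Matrix.mul_sub, Matrix.mul_add, Matrix.add_mul, Matrix.one_mul,
      Matrix.mul_one, hPP.eq]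
    abel
  have hMP : (1 + P * B * P) * P = P * (1 + B) * P := by
    simp only [Matrix.add_mul, Matrix.mul_add, Matrix.one_mul, Matrix.mul_one, Matrix.mul_assoc,
      hPP.eq]
  refine hB.posSemidef_inv_sub ?_ (mul_nonsing_inv_mul_mul_mul_self hM.isUnit hPP hMP)
  simpa only [hP.eq] using isHermitian_conjTranspose_mul_mul P hM.isHermitian.inv

end Matrix

theorem stmt_3_general {n : ℕ} (P B : Matrix (Fin n) (Fin n) ℝ)
    (hPsymm : P.IsSymm) (hPidem : P * P = P)
    (hpd : ((1 : Matrix (Fin n) (Fin n) ℝ) + B).PosDef) :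
    (((1 : Matrix (Fin n) (Fin n) ℝ) + B)⁻¹
      - P * ((1 : Matrix (Fin n) (Fin n) ℝ) + P * B * P)⁻¹ * P).PosSemidef :=
  hpd.posSemidef_inv_sub_compression (isHermitian_iff_isSymm.mpr hPsymm) hPidem

/-- for the orthogonal projection `P` onto a linear subspace `L` and a symmetric
matrix `B` with `I + B ≻ 0`, we have `P (I + P B P)⁻¹ P ⪯ (I + B)⁻¹`. -/
theorem stmt_3 {n : ℕ} (L : Submodule ℝ (Fin n → ℝ)) (P B : Matrix (Fin n) (Fin n) ℝ)
    (hPsymm : P.IsSymm) (hPidem : P * P = P) (hPrange : LinearMap.range P.mulVecLin = L)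
    (hBsymm : B.IsSymm) (hpd : ((1 : Matrix (Fin n) (Fin n) ℝ) + B).PosDef) :
    (((1 : Matrix (Fin n) (Fin n) ℝ) + B)⁻¹
      - P * ((1 : Matrix (Fin n) (Fin n) ℝ) + P * B * P)⁻¹ * P).PosSemidef :=
  stmt_3_general P B hPsymm hPidem hpd
end

section
/- Let B be a symmetric n×n matrix with I + τB positive definite (τ > 0), let S₁, S₂ be linear subspaces of ℝⁿ, and for i = 1, 2 let Pᵢ = Π_{Sᵢ}(I + τAᵢ)^{-1}Π_{Sᵢ} where Aᵢ is symmetric with range(Aᵢ) ⊆ Sᵢ and Aᵢ ⪰ Π_{Sᵢ} B Π_{Sᵢ}. Let P = a₁P₁ + a₂P₂ with a₁, a₂ > 0, a₁ + a₂ = 1. Then P = Π_{S₁+S₂}(I + τA)^{-1}Π_{S₁+S₂} for some symmetric A with range(A) ⊆ S₁ + S₂ and A ⪰ Π_{S₁+S₂} B Π_{S₁+S₂}. -/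
/-!
Write `D₀ = 1 + τ Q₀ B Q₀` for a projection `Q₀`; it is positive definite because `1 + τ B` is.
Since `1 + τ Aᵢ ⪰ Dᵢ := 1 + τ Qᵢ B Qᵢ`, inverting gives `Qᵢ (1 + τ Aᵢ)⁻¹ Qᵢ ⪯ Qᵢ Dᵢ⁻¹ Qᵢ`, and
`Qᵢ Dᵢ⁻¹ Qᵢ ⪯ Q D⁻¹ Q` for `D := 1 + τ Q B Q` by the variational formula
`u ⬝ M⁻¹ u = max_y (2 u ⬝ y - y ⬝ M y)`: the maximiser for `Dᵢ` lies in `Sᵢ ⊆ S₁ + S₂`,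
where `Dᵢ` and `D` have the same quadratic form. Averaging, `N := P + (1 - Q) ⪯ D⁻¹`.
`N` is positive definite (a vector in its kernel lies in `S₁ + S₂` and is orthogonal to `S₁`
and `S₂`), so `D ⪯ N⁻¹`, and
`A := τ⁻¹ (N⁻¹ - 1)` works: it lives on `S₁ + S₂`, `A - Q B Q = τ⁻¹ (N⁻¹ - D) ⪰ 0` and
`Q (1 + τ A)⁻¹ Q = Q N Q = P`.
-/

open scoped MatrixOrder

namespace Matrix

section CommRing

variable {ι R : Type*} [Fintype ι] [CommRing R]

lemma range_mulVecLin_le_of_conj_eq {Q M : Matrix ι ι R} (h : Q * M * Q = M) :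
    LinearMap.range M.mulVecLin ≤ LinearMap.range Q.mulVecLin := by
  rw [← h, Matrix.mul_assoc, mulVecLin_mul]
  exact LinearMap.range_comp_le_range _ _

variable [DecidableEq ι]

lemma mul_eq_of_range_le {Q M : Matrix ι ι R} (hQ : IsIdempotentElem Q)
    (h : LinearMap.range M.mulVecLin ≤ LinearMap.range Q.mulVecLin) : Q * M = M := by
  refine toLin'.injective (LinearMap.ext fun x => ?_)
  obtain ⟨z, hz⟩ := h ⟨x, rfl⟩
  simp only [mulVecLin_apply] at hz
  rw [toLin'_apply, toLin'_apply, ← mulVec_mulVec, ← hz, mulVec_mulVec, hQ.eq]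

lemma dotProduct_mulVec_inv_mulVec {M : Matrix ι ι R} (hM : IsUnit M.det) (u : ι → R) :
    M⁻¹ *ᵥ u ⬝ᵥ M *ᵥ (M⁻¹ *ᵥ u) = u ⬝ᵥ M⁻¹ *ᵥ u := by
  rw [mulVec_mulVec, mul_nonsing_inv _ hM, one_mulVec, dotProduct_comm]

lemma inv_eq_conj_add_one_sub {Q M : Matrix ι ι R} (hQ : IsIdempotentElem Q) (hM : IsUnit M.det)
    (h : M = Q * M * Q + (1 - Q)) : M⁻¹ = Q * M⁻¹ * Q + (1 - Q) := by
  have hQQ : (1 - Q) * Q = 0 := by rw [Matrix.sub_mul, Matrix.one_mul, hQ.eq, sub_self]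
  have hright : M * (1 - Q) = 1 - Q := by
    rw [h]; simp only [Matrix.add_mul, Matrix.mul_sub, Matrix.sub_mul, Matrix.mul_one,
      Matrix.one_mul, Matrix.mul_assoc, hQ.eq]; abel
  have hleft : (1 - Q) * M = 1 - Q := by
    rw [h]; simp only [Matrix.mul_add, Matrix.mul_sub, Matrix.sub_mul, Matrix.mul_one,
      Matrix.one_mul, ← Matrix.mul_assoc, hQ.eq]; abel
  have hleft' : (1 - Q) * M⁻¹ = 1 - Q :=
    calc (1 - Q) * M⁻¹ = (1 - Q) * M * M⁻¹ := by rw [hleft]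
      _ = 1 - Q := mul_nonsing_inv_cancel_right _ _ hM
  have hright' : M⁻¹ * (1 - Q) = 1 - Q :=
    calc M⁻¹ * (1 - Q) = M⁻¹ * (M * (1 - Q)) := by rw [hright]
      _ = 1 - Q := nonsing_inv_mul_cancel_left _ _ hM
  have hQM : Q * M⁻¹ = M⁻¹ - (1 - Q) := by
    rw [← hleft', Matrix.sub_mul, Matrix.one_mul, sub_sub_cancel]
  have hMQ : M⁻¹ * Q = M⁻¹ - (1 - Q) := by
    rw [← hright', Matrix.mul_sub, Matrix.mul_one, sub_sub_cancel]
  rw [hQM, Matrix.sub_mul, hMQ, hQQ]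
  abel

lemma commute_of_eq_conj_add_one_sub {Q M : Matrix ι ι R} (hQ : IsIdempotentElem Q)
    (h : M = Q * M * Q + (1 - Q)) : Commute Q M := by
  have hl : Q * M = Q * M * Q := by
    conv_lhs => rw [h]
    rw [Matrix.mul_add, ← Matrix.mul_assoc, ← Matrix.mul_assoc, hQ.eq, Matrix.mul_sub,
      Matrix.mul_one, hQ.eq, sub_self, add_zero]
  have hr : M * Q = Q * M * Q := by
    conv_lhs => rw [h]
    rw [Matrix.add_mul, Matrix.mul_assoc (Q * M), hQ.eq, Matrix.sub_mul, Matrix.one_mul, hQ.eq,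
      sub_self, add_zero]
  exact hl.trans hr.symm

lemma one_add_conj_eq_conj_add_one_sub {Q K : Matrix ι ι R} (hQ : IsIdempotentElem Q) :
    1 + Q * K * Q = Q * (1 + Q * K * Q) * Q + (1 - Q) := by
  simp only [Matrix.mul_add, Matrix.add_mul, Matrix.mul_one, ← Matrix.mul_assoc, hQ.eq,
    Matrix.mul_assoc (Q * K) Q Q]
  abel

lemma add_one_sub_eq_conj_add_one_sub {Q P : Matrix ι ι R} (hQ : IsIdempotentElem Q)
    (hP : Q * P * Q = P) : P + (1 - Q) = Q * (P + (1 - Q)) * Q + (1 - Q) := by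
  simp only [Matrix.mul_add, Matrix.mul_sub, Matrix.mul_one, hQ.eq, hP, sub_self, add_zero]

end CommRing

section Real

variable {ι : Type*}

lemma PosDef.of_le {M N : Matrix ι ι ℝ} (hM : M.PosDef) (h : M ≤ N) : N.PosDef := by
  simpa using hM.add_posSemidef (le_iff.mp h)

variable [Fintype ι]

lemma conj_smul_le_smul_of_posSemidef_sub {Q B A : Matrix ι ι ℝ}
    (hA : (A - Q * B * Q).PosSemidef) {τ : ℝ} (hτ : 0 ≤ τ) : Q * (τ • B) * Q ≤ τ • A := by
  rw [le_iff, Matrix.mul_smul, Matrix.smul_mul, ← smul_sub]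
  exact hA.smul hτ

lemma isStarProjection_of_isSymm {Q : Matrix ι ι ℝ} (hs : Q.IsSymm) (hi : Q * Q = Q) :
    IsStarProjection Q :=
  ⟨hi, isHermitian_iff_isSymm.mpr hs⟩

lemma IsHermitian.dotProduct_mulVec_comm {M : Matrix ι ι ℝ} (hM : M.IsHermitian) (x y : ι → ℝ) :
    x ⬝ᵥ M *ᵥ y = M *ᵥ x ⬝ᵥ y := by
  rw [dotProduct_mulVec, ← mulVec_transpose, ← conjTranspose_eq_transpose_of_trivial, hM.eq]

lemma IsHermitian.dotProduct_conj_mulVec {Q : Matrix ι ι ℝ} (hQ : Q.IsHermitian)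
    (M : Matrix ι ι ℝ) (x : ι → ℝ) :
    x ⬝ᵥ (Q * M * Q) *ᵥ x = Q *ᵥ x ⬝ᵥ M *ᵥ (Q *ᵥ x) := by
  rw [← mulVec_mulVec, ← mulVec_mulVec, hQ.dotProduct_mulVec_comm]

lemma IsStarProjection.dotProduct_mulVec_self {Q : Matrix ι ι ℝ} (hQ : IsStarProjection Q)
    (x : ι → ℝ) : x ⬝ᵥ Q *ᵥ x = Q *ᵥ x ⬝ᵥ Q *ᵥ x := by
  rw [← IsHermitian.dotProduct_mulVec_comm hQ.isSelfAdjoint, mulVec_mulVec, hQ.isIdempotentElem.eq]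

lemma dotProduct_mulVec_le_of_le {M N : Matrix ι ι ℝ} (h : M ≤ N) (x : ι → ℝ) :
    x ⬝ᵥ M *ᵥ x ≤ x ⬝ᵥ N *ᵥ x := by
  simpa [sub_mulVec] using (le_iff.mp h).dotProduct_mulVec_nonneg x

lemma le_of_dotProduct_mulVec_le {M N : Matrix ι ι ℝ} (hM : M.IsHermitian) (hN : N.IsHermitian)
    (h : ∀ x, x ⬝ᵥ M *ᵥ x ≤ x ⬝ᵥ N *ᵥ x) : M ≤ N :=
  le_iff.mpr <| .of_dotProduct_mulVec_nonneg (hN.sub hM) fun x => by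
    simpa [sub_mulVec] using h x

lemma conj_conj_of_mul_eq {Q₀ Q : Matrix ι ι ℝ} (hQ₀ : IsSelfAdjoint Q₀)
    (hQ : IsSelfAdjoint Q) (hQQ₀ : Q * Q₀ = Q₀) (M : Matrix ι ι ℝ) :
    Q * (Q₀ * M * Q₀) * Q = Q₀ * M * Q₀ := by
  have hQ₀Q : Q₀ * Q = Q₀ := by
    simpa [hQ₀.star_eq, hQ.star_eq] using congrArg star hQQ₀
  rw [← Matrix.mul_assoc, ← Matrix.mul_assoc, hQQ₀, Matrix.mul_assoc, hQ₀Q]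

lemma eq_zero_of_mem_sup_range {Q₁ Q₂ : Matrix ι ι ℝ} (hQ₁ : Q₁.IsHermitian)
    (hQ₂ : Q₂.IsHermitian) {x : ι → ℝ}
    (hx : x ∈ LinearMap.range Q₁.mulVecLin ⊔ LinearMap.range Q₂.mulVecLin)
    (hx₁ : Q₁ *ᵥ x = 0) (hx₂ : Q₂ *ᵥ x = 0) : x = 0 := by
  obtain ⟨_, ⟨z₁, rfl⟩, _, ⟨z₂, rfl⟩, hsum⟩ := Submodule.mem_sup.mp hx
  have h₁ : x ⬝ᵥ Q₁ *ᵥ z₁ = 0 := by rw [hQ₁.dotProduct_mulVec_comm, hx₁, zero_dotProduct]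
  have h₂ : x ⬝ᵥ Q₂ *ᵥ z₂ = 0 := by rw [hQ₂.dotProduct_mulVec_comm, hx₂, zero_dotProduct]
  simp only [mulVecLin_apply] at hsum
  rw [← dotProduct_self_eq_zero]
  nth_rewrite 2 [← hsum]
  rw [dotProduct_add, h₁, h₂, add_zero]

variable [DecidableEq ι]

lemma PosDef.two_mul_dotProduct_sub_le {M : Matrix ι ι ℝ} (hM : M.PosDef) (u y : ι → ℝ) :
    2 * (u ⬝ᵥ y) - y ⬝ᵥ M *ᵥ y ≤ u ⬝ᵥ M⁻¹ *ᵥ u := by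
  set w := M⁻¹ *ᵥ u
  have hMw : M *ᵥ w = u := by
    rw [mulVec_mulVec, mul_nonsing_inv _ (isUnit_iff_isUnit_det M |>.mp hM.isUnit), one_mulVec]
  have h := hM.posSemidef.dotProduct_mulVec_nonneg (w - y)
  simp only [star_trivial, mulVec_sub, dotProduct_sub, sub_dotProduct, hMw] at h
  rw [hM.isHermitian.dotProduct_mulVec_comm w y, hMw, dotProduct_comm w u,
    dotProduct_comm y u] at h
  linarith

lemma PosDef.inv_le_inv {M N : Matrix ι ι ℝ} (hM : M.PosDef) (hN : N.PosDef) (h : M ≤ N) :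
    N⁻¹ ≤ M⁻¹ :=
  le_of_dotProduct_mulVec_le hN.inv.isHermitian hM.inv.isHermitian fun u => by
    have hmax := dotProduct_mulVec_inv_mulVec (isUnit_iff_isUnit_det N |>.mp hN.isUnit) u
    have hvar := hM.two_mul_dotProduct_sub_le u (N⁻¹ *ᵥ u)
    have hMN := dotProduct_mulVec_le_of_le h (N⁻¹ *ᵥ u)
    linarith

lemma posDef_one_add_conj {Q K : Matrix ι ι ℝ} (hQ : IsStarProjection Q) (hK : (1 + K).PosDef) :
    (1 + Q * K * Q).PosDef := by
  have hQh : Q.IsHermitian := hQ.isSelfAdjoint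
  have hsplit : 1 + Q * K * Q = (1 - Q) + Q * (1 + K) * Q := by
    rw [Matrix.mul_add, Matrix.add_mul, Matrix.mul_one, hQ.isIdempotentElem.eq]; abel
  rw [hsplit]
  refine .of_dotProduct_mulVec_pos
    (hQ.one_sub.isSelfAdjoint.add (IsSelfAdjoint.conjugate_self hK.isHermitian hQ.isSelfAdjoint))
    fun x hx => ?_
  rw [star_trivial, add_mulVec, dotProduct_add, IsStarProjection.dotProduct_mulVec_self hQ.one_sub,
    hQh.dotProduct_conj_mulVec]
  by_cases hQx : Q *ᵥ x = 0
  · have hx' : (1 - Q) *ᵥ x = x := by rw [sub_mulVec, one_mulVec, hQx, sub_zero]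
    rw [hx', hQx, mulVec_zero, dotProduct_zero, add_zero]
    simpa using dotProduct_self_star_pos_iff.mpr hx
  · have hpos := hK.dotProduct_mulVec_pos hQx
    rw [star_trivial] at hpos
    have hnonneg : 0 ≤ (1 - Q) *ᵥ x ⬝ᵥ (1 - Q) *ᵥ x := by
      simpa using dotProduct_star_self_nonneg ((1 - Q) *ᵥ x)
    linarith

lemma posDef_one_add_of_conj_le {Q₀ K A₀ : Matrix ι ι ℝ} (hQ₀ : IsStarProjection Q₀)
    (hK : (1 + K).PosDef) (hA₀ : Q₀ * K * Q₀ ≤ A₀) : (1 + A₀).PosDef :=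
  (posDef_one_add_conj hQ₀ hK).of_le (add_le_add_right hA₀ 1)

lemma conj_inv_one_add_conj_le {Q₀ Q K : Matrix ι ι ℝ} (hQ₀ : IsStarProjection Q₀)
    (hQ : IsStarProjection Q) (hQQ₀ : Q * Q₀ = Q₀) (hK : (1 + K).PosDef) :
    Q₀ * (1 + Q₀ * K * Q₀)⁻¹ * Q₀ ≤ Q * (1 + Q * K * Q)⁻¹ * Q := by
  have hQ₀h : Q₀.IsHermitian := hQ₀.isSelfAdjoint
  have hQh : Q.IsHermitian := hQ.isSelfAdjoint
  have hD₀ := posDef_one_add_conj hQ₀ hK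
  have hD := posDef_one_add_conj hQ hK
  have hD₀u : IsUnit (1 + Q₀ * K * Q₀).det := (isUnit_iff_isUnit_det _).mp hD₀.isUnit
  have hcomm : Commute Q₀ (1 + Q₀ * K * Q₀)⁻¹ :=
    commute_of_eq_conj_add_one_sub hQ₀.isIdempotentElem <|
      inv_eq_conj_add_one_sub hQ₀.isIdempotentElem hD₀u
        (one_add_conj_eq_conj_add_one_sub hQ₀.isIdempotentElem)
  refine le_of_dotProduct_mulVec_le (IsSelfAdjoint.conjugate_self hD₀.inv.isHermitian hQ₀h)
    (IsSelfAdjoint.conjugate_self hD.inv.isHermitian hQh) fun u => ?_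
  set y := (1 + Q₀ * K * Q₀)⁻¹ *ᵥ (Q₀ *ᵥ u) with hy
  have hQ₀y : Q₀ *ᵥ y = y := by
    rw [hy, mulVec_mulVec, hcomm.eq, ← mulVec_mulVec, mulVec_mulVec u Q₀,
      hQ₀.isIdempotentElem.eq]
  have hQy : Q *ᵥ y = y := by rw [← hQ₀y, mulVec_mulVec, hQQ₀]
  have hquad : y ⬝ᵥ (1 + Q₀ * K * Q₀) *ᵥ y = y ⬝ᵥ (1 + Q * K * Q) *ᵥ y := by
    rw [add_mulVec, add_mulVec, dotProduct_add, dotProduct_add, hQ₀h.dotProduct_conj_mulVec,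
      hQh.dotProduct_conj_mulVec, hQ₀y, hQy]
  have hlin : Q₀ *ᵥ u ⬝ᵥ y = Q *ᵥ u ⬝ᵥ y := by
    rw [← hQ₀h.dotProduct_mulVec_comm, ← hQh.dotProduct_mulVec_comm, hQ₀y, hQy]
  rw [hQ₀h.dotProduct_conj_mulVec, hQh.dotProduct_conj_mulVec]
  have hmax := dotProduct_mulVec_inv_mulVec hD₀u (Q₀ *ᵥ u)
  have hvar := hD.two_mul_dotProduct_sub_le (Q *ᵥ u) y
  linarith

lemma conj_inv_one_add_le {Q₀ Q K A₀ : Matrix ι ι ℝ} (hQ₀ : IsStarProjection Q₀)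
    (hQ : IsStarProjection Q) (hQQ₀ : Q * Q₀ = Q₀) (hK : (1 + K).PosDef)
    (hA₀ : Q₀ * K * Q₀ ≤ A₀) : Q₀ * (1 + A₀)⁻¹ * Q₀ ≤ Q * (1 + Q * K * Q)⁻¹ * Q :=
  calc Q₀ * (1 + A₀)⁻¹ * Q₀ ≤ Q₀ * (1 + Q₀ * K * Q₀)⁻¹ * Q₀ :=
        hQ₀.isSelfAdjoint.conjugate_le_conjugate <| (posDef_one_add_conj hQ₀ hK).inv_le_inv
          (posDef_one_add_of_conj_le hQ₀ hK hA₀) (add_le_add_right hA₀ 1)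
    _ ≤ Q * (1 + Q * K * Q)⁻¹ * Q := conj_inv_one_add_conj_le hQ₀ hQ hQQ₀ hK

lemma posDef_smul_conj_add_smul_conj_add_one_sub {Q₁ Q₂ Q M₁ M₂ : Matrix ι ι ℝ} {a₁ a₂ : ℝ}
    (hQ₁ : Q₁.IsHermitian) (hQ₂ : Q₂.IsHermitian) (hQ : IsStarProjection Q)
    (hr : LinearMap.range Q.mulVecLin =
      LinearMap.range Q₁.mulVecLin ⊔ LinearMap.range Q₂.mulVecLin)
    (hM₁ : M₁.PosDef) (hM₂ : M₂.PosDef) (ha₁ : 0 < a₁) (ha₂ : 0 < a₂) :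
    (a₁ • (Q₁ * M₁ * Q₁) + a₂ • (Q₂ * M₂ * Q₂) + (1 - Q)).PosDef := by
  refine .of_dotProduct_mulVec_pos
    (((IsSelfAdjoint.all a₁).smul (IsSelfAdjoint.conjugate_self hM₁.isHermitian hQ₁)).add
      ((IsSelfAdjoint.all a₂).smul (IsSelfAdjoint.conjugate_self hM₂.isHermitian hQ₂)) |>.add
      hQ.one_sub.isSelfAdjoint) fun x hx => ?_
  rw [star_trivial]
  simp only [add_mulVec, smul_mulVec, dotProduct_add, dotProduct_smul, smul_eq_mul,
    hQ₁.dotProduct_conj_mulVec, hQ₂.dotProduct_conj_mulVec,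
    IsStarProjection.dotProduct_mulVec_self hQ.one_sub]
  by_contra! hle
  have hq₁ := hM₁.posSemidef.dotProduct_mulVec_nonneg (Q₁ *ᵥ x)
  have hq₂ := hM₂.posSemidef.dotProduct_mulVec_nonneg (Q₂ *ᵥ x)
  have hq := dotProduct_star_self_nonneg ((1 - Q) *ᵥ x)
  rw [star_trivial] at hq₁ hq₂ hq
  have hx₁ : Q₁ *ᵥ x = 0 := by
    by_contra h
    have := hM₁.dotProduct_mulVec_pos h
    rw [star_trivial] at this
    nlinarith
  have hx₂ : Q₂ *ᵥ x = 0 := by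
    by_contra h
    have := hM₂.dotProduct_mulVec_pos h
    rw [star_trivial] at this
    nlinarith
  have hxQ : Q *ᵥ x = x := by
    have h : (1 - Q) *ᵥ x ⬝ᵥ (1 - Q) *ᵥ x = 0 := by nlinarith
    rw [dotProduct_self_eq_zero, sub_mulVec, one_mulVec, sub_eq_zero] at h
    exact h.symm
  exact hx (eq_zero_of_mem_sup_range hQ₁ hQ₂ (hr ▸ ⟨x, hxQ⟩) hx₁ hx₂)

lemma exists_inv_one_add_smul_eq {τ : ℝ} (hτ : 0 < τ) {Q B N : Matrix ι ι ℝ}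
    (hQ : IsIdempotentElem Q) (hN : N.PosDef) (hNQ : N = Q * N * Q + (1 - Q))
    (hle : 1 + Q * (τ • B) * Q ≤ N⁻¹) :
    ∃ A : Matrix ι ι ℝ, A.IsHermitian ∧ Q * A * Q = A ∧ Q * B * Q ≤ A ∧ (1 + τ • A)⁻¹ = N := by
  have hNu : IsUnit N.det := (isUnit_iff_isUnit_det _).mp hN.isUnit
  refine ⟨τ⁻¹ • (N⁻¹ - 1), ?_, ?_, ?_, ?_⟩
  · exact (hN.inv.isHermitian.sub isHermitian_one).smul (.all _)
  · have hinv := inv_eq_conj_add_one_sub hQ hNu hNQ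
    rw [Matrix.mul_smul, Matrix.smul_mul, Matrix.mul_sub, Matrix.sub_mul, Matrix.mul_one, hQ.eq]
    nth_rewrite 2 [hinv]
    congr 1
    abel
  · rw [Matrix.mul_smul, Matrix.smul_mul] at hle
    rw [le_iff]
    convert (le_iff.mp hle).smul (inv_nonneg.mpr hτ.le) using 1
    rw [smul_sub, smul_sub, smul_add, smul_smul, inv_mul_cancel₀ hτ.ne', one_smul]
    abel
  · rw [smul_smul, mul_inv_cancel₀ hτ.ne', one_smul, add_sub_cancel, nonsing_inv_nonsing_inv _ hNu]

end Real

end Matrix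

open Matrix

theorem stmt_4_general {n : ℕ} (τ : ℝ) (hτ : 0 < τ)
    (B : Matrix (Fin n) (Fin n) ℝ)
    (hpd : ((1 : Matrix (Fin n) (Fin n) ℝ) + τ • B).PosDef)
    (S₁ S₂ : Submodule ℝ (Fin n → ℝ))
    (Q₁ Q₂ Q A₁ A₂ : Matrix (Fin n) (Fin n) ℝ)
    (hQ₁s : Q₁.IsSymm) (hQ₁i : Q₁ * Q₁ = Q₁) (hQ₁r : LinearMap.range Q₁.mulVecLin = S₁)
    (hQ₂s : Q₂.IsSymm) (hQ₂i : Q₂ * Q₂ = Q₂) (hQ₂r : LinearMap.range Q₂.mulVecLin = S₂)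
    (hQs : Q.IsSymm) (hQi : Q * Q = Q) (hQr : LinearMap.range Q.mulVecLin = S₁ ⊔ S₂)
    (hA₁ : (A₁ - Q₁ * B * Q₁).PosSemidef)
    (hA₂ : (A₂ - Q₂ * B * Q₂).PosSemidef)
    (a₁ a₂ : ℝ) (ha₁ : 0 < a₁) (ha₂ : 0 < a₂) (hsum : a₁ + a₂ = 1) :
    ∃ A : Matrix (Fin n) (Fin n) ℝ, A.IsSymm ∧
      LinearMap.range A.mulVecLin ≤ S₁ ⊔ S₂ ∧
      (A - Q * B * Q).PosSemidef ∧
      a₁ • (Q₁ * ((1 : Matrix (Fin n) (Fin n) ℝ) + τ • A₁)⁻¹ * Q₁)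
        + a₂ • (Q₂ * ((1 : Matrix (Fin n) (Fin n) ℝ) + τ • A₂)⁻¹ * Q₂)
        = Q * ((1 : Matrix (Fin n) (Fin n) ℝ) + τ • A)⁻¹ * Q := by
  have hQ := isStarProjection_of_isSymm hQs hQi
  have hQ₁ := isStarProjection_of_isSymm hQ₁s hQ₁i
  have hQ₂ := isStarProjection_of_isSymm hQ₂s hQ₂i
  have hQQ₁ : Q * Q₁ = Q₁ := mul_eq_of_range_le hQi (by rw [hQ₁r, hQr]; exact le_sup_left)
  have hQQ₂ : Q * Q₂ = Q₂ := mul_eq_of_range_le hQi (by rw [hQ₂r, hQr]; exact le_sup_right)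
  have hBA₁ := conj_smul_le_smul_of_posSemidef_sub hA₁ hτ.le
  have hBA₂ := conj_smul_le_smul_of_posSemidef_sub hA₂ hτ.le
  set D := 1 + Q * (τ • B) * Q
  set P := a₁ • (Q₁ * (1 + τ • A₁)⁻¹ * Q₁) + a₂ • (Q₂ * (1 + τ • A₂)⁻¹ * Q₂)
  have hD : D.PosDef := posDef_one_add_conj hQ hpd
  have hDu : IsUnit D.det := (isUnit_iff_isUnit_det _).mp hD.isUnit
  have hN : (P + (1 - Q)).PosDef :=
    posDef_smul_conj_add_smul_conj_add_one_sub hQ₁.isSelfAdjoint hQ₂.isSelfAdjoint hQ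
      (by rw [hQr, hQ₁r, hQ₂r]) (posDef_one_add_of_conj_le hQ₁ hpd hBA₁).inv
      (posDef_one_add_of_conj_le hQ₂ hpd hBA₂).inv ha₁ ha₂
  have hPQ : Q * P * Q = P := by
    simp only [P, Matrix.mul_add, Matrix.add_mul, Matrix.mul_smul, Matrix.smul_mul,
      conj_conj_of_mul_eq hQ₁.isSelfAdjoint hQ.isSelfAdjoint hQQ₁,
      conj_conj_of_mul_eq hQ₂.isSelfAdjoint hQ.isSelfAdjoint hQQ₂]
  have hND : P + (1 - Q) ≤ D⁻¹ := by
    rw [inv_eq_conj_add_one_sub hQi hDu (one_add_conj_eq_conj_add_one_sub hQi)]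
    exact add_le_add_left (convex_Iic _ (conj_inv_one_add_le hQ₁ hQ hQQ₁ hpd hBA₁)
      (conj_inv_one_add_le hQ₂ hQ hQQ₂ hpd hBA₂) ha₁.le ha₂.le hsum) _
  have hNQ := add_one_sub_eq_conj_add_one_sub hQi hPQ
  obtain ⟨A, hAh, hAQ, hBA, hAN⟩ := exists_inv_one_add_smul_eq hτ hQi hN hNQ
    (nonsing_inv_nonsing_inv _ hDu ▸ hN.inv_le_inv hD.inv hND)
  refine ⟨A, isHermitian_iff_isSymm.mp hAh, hQr ▸ range_mulVecLin_le_of_conj_eq hAQ, hBA, ?_⟩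
  rw [hAN]
  exact (add_right_cancel hNQ.symm).symm

/-- convex combination of two compressed inverses is again a compressed inverse
on the sum of the subspaces (r = 2 case of Proposition 2.8). Here `Q₁, Q₂, Q` are the
orthogonal projections onto `S₁`, `S₂` and `S₁ + S₂` respectively. -/
theorem stmt_4 {n : ℕ} (τ : ℝ) (hτ : 0 < τ)
    (B : Matrix (Fin n) (Fin n) ℝ) (hBsymm : B.IsSymm)
    (hpd : ((1 : Matrix (Fin n) (Fin n) ℝ) + τ • B).PosDef)
    (S₁ S₂ : Submodule ℝ (Fin n → ℝ))
    (Q₁ Q₂ Q A₁ A₂ : Matrix (Fin n) (Fin n) ℝ)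
    (hQ₁s : Q₁.IsSymm) (hQ₁i : Q₁ * Q₁ = Q₁) (hQ₁r : LinearMap.range Q₁.mulVecLin = S₁)
    (hQ₂s : Q₂.IsSymm) (hQ₂i : Q₂ * Q₂ = Q₂) (hQ₂r : LinearMap.range Q₂.mulVecLin = S₂)
    (hQs : Q.IsSymm) (hQi : Q * Q = Q) (hQr : LinearMap.range Q.mulVecLin = S₁ ⊔ S₂)
    (hA₁s : A₁.IsSymm) (hA₁r : LinearMap.range A₁.mulVecLin ≤ S₁)
    (hA₁ : (A₁ - Q₁ * B * Q₁).PosSemidef)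
    (hA₂s : A₂.IsSymm) (hA₂r : LinearMap.range A₂.mulVecLin ≤ S₂)
    (hA₂ : (A₂ - Q₂ * B * Q₂).PosSemidef)
    (a₁ a₂ : ℝ) (ha₁ : 0 < a₁) (ha₂ : 0 < a₂) (hsum : a₁ + a₂ = 1) :
    ∃ A : Matrix (Fin n) (Fin n) ℝ, A.IsSymm ∧
      LinearMap.range A.mulVecLin ≤ S₁ ⊔ S₂ ∧
      (A - Q * B * Q).PosSemidef ∧
      a₁ • (Q₁ * ((1 : Matrix (Fin n) (Fin n) ℝ) + τ • A₁)⁻¹ * Q₁)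
        + a₂ • (Q₂ * ((1 : Matrix (Fin n) (Fin n) ℝ) + τ • A₂)⁻¹ * Q₂)
        = Q * ((1 : Matrix (Fin n) (Fin n) ℝ) + τ • A)⁻¹ * Q :=
  stmt_4_general τ hτ B hpd S₁ S₂ Q₁ Q₂ Q A₁ A₂ hQ₁s hQ₁i hQ₁r hQ₂s hQ₂i hQ₂r hQs hQi hQr hA₁ hA₂ a₁
    a₂ ha₁ ha₂ hsum
end

section
/- Let f(x) = ½⟨x, Ax⟩ on ℝ² with A = [[2, 2], [2, 1]], let φ be the indicator function of the nonnegative orthant ℝ²₊, τ = 1, and z̄ = (0,0). Then each of the four matrices AD + I − D, for D ∈ {I, diag(1,0), diag(0,1), 0}, is invertible, yet A is not positive semidefinite on ℝ² (e.g. ⟨h, Ah⟩ < 0 for h = (1, −2)). -/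
/-!
For a 2×2 matrix and a diagonal `D = diag(d₀, d₁)`, `det (A D + 1 - D)` is computed entrywise;
at the four 0/1 choices of `D` it is the determinant of the principal submatrix of `A` selected
by `D`, namely `-2, 2, 1, 1` for `A = [[2,2],[2,1]]`. The negative determinant of `A` already
forces indefiniteness, witnessed by `h = (1, -2)` with `A h = (-2, 0)`.
-/

open Matrix

theorem Matrix.not_posSemidef_of_dotProduct_mulVec_neg {n : Type*} [Fintype n]
    {A : Matrix n n ℝ} (x : n → ℝ) (hx : x ⬝ᵥ A *ᵥ x < 0) : ¬ A.PosSemidef := fun hA =>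
  hx.not_ge (by simpa using hA.dotProduct_mulVec_nonneg x)

theorem Matrix.det_fin_two_mul_diagonal_add_one_sub_diagonal {R : Type*} [CommRing R]
    (A : Matrix (Fin 2) (Fin 2) R) (d : Fin 2 → R) :
    (A * diagonal d + 1 - diagonal d).det =
      (A 0 0 * d 0 + 1 - d 0) * (A 1 1 * d 1 + 1 - d 1) - A 0 1 * A 1 0 * d 0 * d 1 := by
  simp only [det_fin_two, sub_apply, add_apply, mul_diagonal, one_apply_eq, one_apply_ne,
    diagonal_apply_eq, diagonal_apply_ne, ne_eq, zero_ne_one, one_ne_zero, not_false_eq_true,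
    add_zero, sub_zero]
  ring

/-- for `A = [[2,2],[2,1]]`, each matrix `AD + I − D` with
`D ∈ {I, diag(1,0), diag(0,1), 0}` is invertible, yet `A` is not positive semidefinite;
in particular `⟨h, Ah⟩ < 0` for `h = (1, −2)`. -/
theorem stmt_8 :
    (∀ D ∈ ({1, Matrix.diagonal ![1, 0], Matrix.diagonal ![0, 1], 0} :
        Set (Matrix (Fin 2) (Fin 2) ℝ)),
      IsUnit ((!![2, 2; 2, 1] : Matrix (Fin 2) (Fin 2) ℝ) * D + 1 - D)) ∧
    (¬ (!![2, 2; 2, 1] : Matrix (Fin 2) (Fin 2) ℝ).PosSemidef) ∧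
    ((![1, -2] : Fin 2 → ℝ) ⬝ᵥ ((!![2, 2; 2, 1] : Matrix (Fin 2) (Fin 2) ℝ).mulVec ![1, -2]) < 0) := by
  have hneg :
      (![1, -2] : Fin 2 → ℝ) ⬝ᵥ (!![2, 2; 2, 1] : Matrix (Fin 2) (Fin 2) ℝ) *ᵥ ![1, -2] < 0 := by
    norm_num [dotProduct, mulVec, Fin.sum_univ_two]
  refine ⟨?_, not_posSemidef_of_dotProduct_mulVec_neg _ hneg, hneg⟩
  intro D hD
  rw [isUnit_iff_isUnit_det, isUnit_iff_ne_zero]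
  rcases hD with rfl | rfl | rfl | rfl
  · norm_num [det_fin_two]
  · rw [det_fin_two_mul_diagonal_add_one_sub_diagonal]; norm_num
  · rw [det_fin_two_mul_diagonal_add_one_sub_diagonal]; norm_num
  · simp
end

section
/- Define F : ℝ² → ℝ² by F(x) = x − Π_K(x − τ∇f(x)) with f(x) = ½(2x₁² − x₂²), τ = 1/2, and K = {x : x₁ ≥ |x₂|}. Then F(x) = (x₁ − (3/4)|x₂|, (1/4)x₂) for all x, the map F is bijective with inverse F^{-1}(y) = (y₁ + 3|y₂|, 4y₂), and F^{-1} is globally Lipschitz continuous. -/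
/-! Since `∇f(x) = (2x₁, -x₂)`, the point `x - τ∇f(x) = (0, (3/2)x₂)` lies on the vertical axis.
For `|b| ≤ a` one has `a² + (t - b)² ≥ b² + (t - b)² ≥ t²/2`, with equality only at
`(a, b) = (|t|/2, t/2)`; so the projection of `(0, t)` onto `K` is `(|t|/2, t/2)`, which gives the
formula for `F`. Its inverse is read off coordinatewise, and is Lipschitz because `|·|` is. -/

/-- The cone `K = {x ∈ ℝ² : x₁ ≥ |x₂|}`. -/
def iceCone : Set (EuclideanSpace ℝ (Fin 2)) := {x | |x 1| ≤ x 0}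

/-- `proj` is the Euclidean projection map onto `K`. -/
def IsProjMapK (proj : EuclideanSpace ℝ (Fin 2) → EuclideanSpace ℝ (Fin 2)) : Prop :=
  ∀ x, proj x ∈ iceCone ∧ ∀ y ∈ iceCone, dist x (proj x) ≤ dist x y

lemma EuclideanSpace.dist_sq_fin_two (x y : EuclideanSpace ℝ (Fin 2)) :
    dist x y ^ 2 = (x 0 - y 0) ^ 2 + (x 1 - y 1) ^ 2 := by
  rw [EuclideanSpace.dist_eq, Real.sq_sqrt (by positivity), Fin.sum_univ_two,
    Real.dist_eq, Real.dist_eq, sq_abs, sq_abs]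

lemma eq_of_abs_le_of_sq_add_sq_le {a b t : ℝ} (hab : |b| ≤ a)
    (h : a ^ 2 + (t - b) ^ 2 ≤ t ^ 2 / 2) : a = |t| / 2 ∧ b = t / 2 := by
  have hb : b ^ 2 ≤ a ^ 2 := sq_le_sq' (neg_le_of_abs_le hab) (le_of_abs_le hab)
  have hbt : b = t / 2 := by nlinarith [sq_nonneg (b - t / 2)]
  have ha : |t| / 2 ≤ a := by rwa [hbt, abs_div, abs_two] at hab
  have ha_sq : a ^ 2 ≤ (|t| / 2) ^ 2 := by
    rw [div_pow, sq_abs]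
    nlinarith
  exact ⟨le_antisymm (le_of_sq_le_sq ha_sq (by positivity)) ha, hbt⟩

lemma IsProjMapK.apply_eq {proj : EuclideanSpace ℝ (Fin 2) → EuclideanSpace ℝ (Fin 2)}
    (hproj : IsProjMapK proj) {x p : EuclideanSpace ℝ (Fin 2)} (hp : p ∈ iceCone)
    (hmin : ∀ y ∈ iceCone, dist x y ≤ dist x p → y = p) : proj x = p :=
  hmin _ (hproj x).1 ((hproj x).2 p hp)

lemma IsProjMapK.apply_toLp_zero_left
    {proj : EuclideanSpace ℝ (Fin 2) → EuclideanSpace ℝ (Fin 2)} (hproj : IsProjMapK proj)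
    (t : ℝ) : proj !₂[0, t] = !₂[|t| / 2, t / 2] := by
  refine hproj.apply_eq (by simp [iceCone, abs_div]) fun y (hy : |y 1| ≤ y 0) hle => ?_
  have hsq := pow_le_pow_left₀ dist_nonneg hle 2
  rw [EuclideanSpace.dist_sq_fin_two, EuclideanSpace.dist_sq_fin_two] at hsq
  simp only [Matrix.cons_val_zero, Matrix.cons_val_one] at hsq
  obtain ⟨h0, h1⟩ := eq_of_abs_le_of_sq_add_sq_le (t := t) hy (by nlinarith [sq_abs t])
  ext i
  fin_cases i
  exacts [h0, h1]

lemma lipschitzWith_toLp_add_mul_abs (a b : ℝ) :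
    LipschitzWith (1 + ‖a‖₊ + ‖b‖₊)
      (fun y : EuclideanSpace ℝ (Fin 2) => !₂[y 0 + a * |y 1|, b * y 1]) := by
  refine LipschitzWith.of_dist_le_mul fun y z => ?_
  have h0 : |y 0 - z 0| ≤ dist y z := PiLp.dist_apply_le y z 0
  have h1 : |y 1 - z 1| ≤ dist y z := PiLp.dist_apply_le y z 1
  have habs : |(|y 1| - |z 1|)| ≤ |y 1 - z 1| := abs_abs_sub_abs_le_abs_sub _ _
  have hfirst : |y 0 + a * |y 1| - (z 0 + a * |z 1|)| ≤ |y 0 - z 0| + |a| * |y 1 - z 1| :=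
    calc _ = |(y 0 - z 0) + a * (|y 1| - |z 1|)| := by ring_nf
      _ ≤ |y 0 - z 0| + |a| * |(|y 1| - |z 1|)| := by rw [← abs_mul]; exact abs_add_le _ _
      _ ≤ _ := by gcongr
  push_cast [coe_nnnorm, Real.norm_eq_abs]
  refine le_of_sq_le_sq ?_ (by positivity)
  calc dist _ _ ^ 2
      = |y 0 + a * |y 1| - (z 0 + a * |z 1|)| ^ 2 + (|b| * |y 1 - z 1|) ^ 2 := by
        rw [EuclideanSpace.dist_sq_fin_two, sq_abs, ← abs_mul, sq_abs]
        simp only [Matrix.cons_val_zero, Matrix.cons_val_one]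
        ring
    _ ≤ (|y 0 - z 0| + |a| * |y 1 - z 1| + |b| * |y 1 - z 1|) ^ 2 := by
        have := pow_le_pow_left₀ (abs_nonneg _) hfirst 2
        nlinarith [mul_nonneg (add_nonneg (abs_nonneg (y 0 - z 0))
          (mul_nonneg (abs_nonneg a) (abs_nonneg (y 1 - z 1))))
          (mul_nonneg (abs_nonneg b) (abs_nonneg (y 1 - z 1)))]
    _ ≤ ((1 + |a| + |b|) * dist y z) ^ 2 := by
        refine pow_le_pow_left₀ (by positivity) ?_ 2
        linear_combination h0 + |a| * h1 + |b| * h1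

/-- for `F(x) = x − Π_K(x − τ∇f(x))` with `f(x) = ½(2x₁² − x₂²)` and `τ = 1/2`,
one has `F(x) = (x₁ − (3/4)|x₂|, (1/4)x₂)`, `F` is bijective with inverse
`y ↦ (y₁ + 3|y₂|, 4y₂)`, and the inverse is globally Lipschitz. -/
theorem stmt_10 (proj : EuclideanSpace ℝ (Fin 2) → EuclideanSpace ℝ (Fin 2))
    (hproj : IsProjMapK proj)
    (F : EuclideanSpace ℝ (Fin 2) → EuclideanSpace ℝ (Fin 2))
    (hF : ∀ x, F x = x - proj
      (WithLp.toLp 2 ![x 0 - (1 / 2) * (2 * x 0), x 1 - (1 / 2) * (-(x 1))] : EuclideanSpace ℝ (Fin 2))) :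
    (∀ x, F x = (WithLp.toLp 2 ![x 0 - (3 / 4) * |x 1|, (1 / 4) * x 1] : EuclideanSpace ℝ (Fin 2))) ∧
    Function.Bijective F ∧
    Function.LeftInverse
      (fun y : EuclideanSpace ℝ (Fin 2) =>
        (WithLp.toLp 2 ![y 0 + 3 * |y 1|, 4 * y 1] : EuclideanSpace ℝ (Fin 2))) F ∧
    Function.RightInverse
      (fun y : EuclideanSpace ℝ (Fin 2) =>
        (WithLp.toLp 2 ![y 0 + 3 * |y 1|, 4 * y 1] : EuclideanSpace ℝ (Fin 2))) F ∧
    ∃ L : NNReal, LipschitzWith L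
      (fun y : EuclideanSpace ℝ (Fin 2) =>
        (WithLp.toLp 2 ![y 0 + 3 * |y 1|, 4 * y 1] : EuclideanSpace ℝ (Fin 2))) := by
  have hFx : ∀ x, F x = !₂[x 0 - (3 / 4) * |x 1|, (1 / 4) * x 1] := by
    intro x
    have hstep : (WithLp.toLp 2 ![x 0 - (1 / 2) * (2 * x 0), x 1 - (1 / 2) * (-(x 1))] :
        EuclideanSpace ℝ (Fin 2)) = !₂[0, 3 / 2 * x 1] := by
      congr 3 <;> ring
    rw [hF, hstep, hproj.apply_toLp_zero_left]
    ext i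
    fin_cases i <;> simp [abs_mul] <;> ring
  obtain rfl : F = fun x => !₂[x 0 - (3 / 4) * |x 1|, (1 / 4) * x 1] := funext hFx
  have hleft : Function.LeftInverse
      (fun y : EuclideanSpace ℝ (Fin 2) => !₂[y 0 + 3 * |y 1|, 4 * y 1])
      (fun x => !₂[x 0 - (3 / 4) * |x 1|, (1 / 4) * x 1]) := fun x => by
    ext i; fin_cases i <;> simp [abs_mul]; ring
  have hright : Function.RightInverse
      (fun y : EuclideanSpace ℝ (Fin 2) => !₂[y 0 + 3 * |y 1|, 4 * y 1])
      (fun x => !₂[x 0 - (3 / 4) * |x 1|, (1 / 4) * x 1]) := fun y => by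
    ext i; fin_cases i <;> simp [abs_mul]; ring
  exact ⟨hFx, ⟨hleft.injective, hright.surjective⟩, hleft, hright, _,
    lipschitzWith_toLp_add_mul_abs 3 4⟩
end

section
/- Let C₁ = {(0,0,x₃) : x₃ ∈ [−1,1]} and C₂ = {(x₁, x₂, 0) : x₁² + (x₂−1)² = 1, x₁ ≥ 0} in ℝ³, and let C be the closed convex hull of C₁ ∪ C₂. For every x in the open set K = {x : x₁ > 0, x₂ < 0, |x₃| < √(x₁²+x₂²) + x₂}, the support function satisfies σ_C(x) = √(x₁² + x₂²) + x₂. -/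
open scoped RealInnerProductSpace

/-- The segment `C₁ = {(0,0,x₃) : x₃ ∈ [−1,1]}`. -/
def segC1 : Set (EuclideanSpace ℝ (Fin 3)) :=
  {p | p 0 = 0 ∧ p 1 = 0 ∧ p 2 ∈ Set.Icc (-1 : ℝ) 1}

/-- The circular arc `C₂ = {(x₁,x₂,0) : x₁² + (x₂−1)² = 1, x₁ ≥ 0}`. -/
def arcC2 : Set (EuclideanSpace ℝ (Fin 3)) :=
  {p | (p 0) ^ 2 + (p 1 - 1) ^ 2 = 1 ∧ 0 ≤ p 0 ∧ p 2 = 0}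

/-!
A linear functional attains the same maximum on `s` as on the closed convex hull of `s`,
since the half-space below that maximum is closed and convex. On the segment `C₁` the
functional `⟪x, ·⟫` is at most `|x₃|`. Writing a point of the arc as `(0,1,0) + (u,v,0)` with
`u² + v² = 1`, Cauchy–Schwarz bounds `⟪x, ·⟫` on `C₂` by `x₂ + √(x₁² + x₂²)`, with equality at
`(u,v) = (x₁,x₂)/√(x₁² + x₂²)`, which lies on the arc because `x₁ > 0`. The hypothesis on `|x₃|`
makes the arc win.
-/

theorem isGreatest_image_closure_convexHull {E : Type*} [AddCommGroup E] [Module ℝ E]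
    [TopologicalSpace E] (f : E →L[ℝ] ℝ) {s : Set E} {M : ℝ} (h : IsGreatest (f '' s) M) :
    IsGreatest (f '' closure (convexHull ℝ s)) M := by
  refine ⟨Set.image_mono (subset_convexHull ℝ s |>.trans subset_closure) h.1, ?_⟩
  rintro _ ⟨c, hc, rfl⟩
  have hs : s ⊆ {c | f c ≤ M} := fun c hc => h.2 ⟨c, hc, rfl⟩
  exact closure_minimal (convexHull_min hs (convex_halfSpace_le f.toLinearMap.isLinear M))
    (isClosed_le f.continuous continuous_const) hc

theorem mul_add_mul_le_sqrt_of_sq_add_sq_eq_one {a b u v : ℝ} (huv : u ^ 2 + v ^ 2 = 1) :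
    a * u + b * v ≤ Real.sqrt (a ^ 2 + b ^ 2) := by
  have hr := Real.sq_sqrt (add_nonneg (sq_nonneg a) (sq_nonneg b))
  nlinarith [sq_nonneg (a * v - b * u), Real.sqrt_nonneg (a ^ 2 + b ^ 2),
    sq_nonneg (Real.sqrt (a ^ 2 + b ^ 2) - (a * u + b * v))]

theorem EuclideanSpace.inner_fin_three (x p : EuclideanSpace ℝ (Fin 3)) :
    ⟪x, p⟫ = x 0 * p 0 + x 1 * p 1 + x 2 * p 2 := by
  simp only [PiLp.inner_apply, RCLike.inner_apply, Fin.sum_univ_three, conj_trivial]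
  ring

section SupportFunction

variable {x p : EuclideanSpace ℝ (Fin 3)}

theorem inner_le_abs_of_mem_segC1 (hp : p ∈ segC1) : ⟪x, p⟫ ≤ |x 2| := by
  obtain ⟨hp0, hp1, hp2⟩ := hp
  rw [EuclideanSpace.inner_fin_three, hp0, hp1]
  calc x 0 * 0 + x 1 * 0 + x 2 * p 2 = x 2 * p 2 := by ring
    _ ≤ |x 2 * p 2| := le_abs_self _
    _ = |x 2| * |p 2| := abs_mul _ _
    _ ≤ |x 2| * 1 := by gcongr; exact abs_le.2 hp2
    _ = |x 2| := mul_one _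

theorem inner_le_of_mem_arcC2 (hp : p ∈ arcC2) :
    ⟪x, p⟫ ≤ Real.sqrt (x 0 ^ 2 + x 1 ^ 2) + x 1 := by
  obtain ⟨hcirc, -, hp2⟩ := hp
  have := mul_add_mul_le_sqrt_of_sq_add_sq_eq_one (a := x 0) (b := x 1) hcirc
  rw [EuclideanSpace.inner_fin_three, hp2]
  linarith

theorem exists_mem_arcC2_inner_eq (hx : 0 < x 0) :
    ∃ p ∈ arcC2, ⟪x, p⟫ = Real.sqrt (x 0 ^ 2 + x 1 ^ 2) + x 1 := by
  set r := Real.sqrt (x 0 ^ 2 + x 1 ^ 2)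
  have hr2 : r ^ 2 = x 0 ^ 2 + x 1 ^ 2 := Real.sq_sqrt (by positivity)
  have hr : 0 < r := Real.sqrt_pos.2 (by positivity)
  refine ⟨!₂[x 0 / r, 1 + x 1 / r, 0], ⟨?_, ?_, rfl⟩, ?_⟩
  · change (x 0 / r) ^ 2 + (1 + x 1 / r - 1) ^ 2 = 1
    field_simp
    linarith
  · exact div_nonneg hx.le hr.le
  · rw [EuclideanSpace.inner_fin_three]
    change x 0 * (x 0 / r) + x 1 * (1 + x 1 / r) + x 2 * 0 = r + x 1
    field_simp
    linarith

theorem isGreatest_inner_image_segC1_union_arcC2 (h1 : 0 < x 0)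
    (h3 : |x 2| < Real.sqrt (x 0 ^ 2 + x 1 ^ 2) + x 1) :
    IsGreatest ((fun c => ⟪x, c⟫) '' (segC1 ∪ arcC2)) (Real.sqrt (x 0 ^ 2 + x 1 ^ 2) + x 1) := by
  obtain ⟨p, hp, hpx⟩ := exists_mem_arcC2_inner_eq h1
  refine ⟨⟨p, Or.inr hp, hpx⟩, ?_⟩
  rintro _ ⟨c, hc | hc, rfl⟩
  · exact (inner_le_abs_of_mem_segC1 hc).trans h3.le
  · exact inner_le_of_mem_arcC2 hc

end SupportFunction

theorem stmt_11_general (x : EuclideanSpace ℝ (Fin 3))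
    (h1 : 0 < x 0)
    (h3 : |x 2| < Real.sqrt ((x 0) ^ 2 + (x 1) ^ 2) + x 1) :
    sSup ((fun c => ⟪x, c⟫) '' closure (convexHull ℝ (segC1 ∪ arcC2)))
      = Real.sqrt ((x 0) ^ 2 + (x 1) ^ 2) + x 1 :=
  (isGreatest_image_closure_convexHull (innerSL ℝ x)
    (isGreatest_inner_image_segC1_union_arcC2 h1 h3)).csSup_eq

/-- for `C` the closed convex hull of `C₁ ∪ C₂` and any `x` with `x₁ > 0`,
`x₂ < 0`, `|x₃| < √(x₁²+x₂²) + x₂`, the support function of `C` at `x` equals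
`√(x₁²+x₂²) + x₂`. -/
theorem stmt_11 (x : EuclideanSpace ℝ (Fin 3))
    (h1 : 0 < x 0) (h2 : x 1 < 0)
    (h3 : |x 2| < Real.sqrt ((x 0) ^ 2 + (x 1) ^ 2) + x 1) :
    sSup ((fun c => ⟪x, c⟫) '' closure (convexHull ℝ (segC1 ∪ arcC2)))
      = Real.sqrt ((x 0) ^ 2 + (x 1) ^ 2) + x 1 :=
  stmt_11_general x h1 h3
end

section
/- Let D be an n×n symmetric positive semidefinite matrix, B symmetric, τ, σ > 0, and suppose DBD + τ^{-1}D(I − D) ⪰ σD². Then there exist ε₁, ε₂ > 0 such that for every symmetric positive semidefinite D̃ with ‖D̃ − D‖ < ε₁ and every symmetric B̃ with ‖B̃ − B‖ < ε₂, one has D̃B̃D̃ + τ^{-1}D̃(I − D̃) ⪰ (σ/4)·D̃². -/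
/-!
Split a vector `x = p + q` along the spectral decomposition of the perturbed `D'`: `p` lives on
the eigenvalues `≥ δ`, `q` on those `< δ`. On `q` the term `τ⁻¹ ⟪q, D' q⟫ ≥ (τ⁻¹ / δ) ‖D' q‖²`
dominates everything else once `δ` is small, which only requires a bound on `‖B'‖`. On `p` we
have `δ ‖p‖ ≤ ‖D' p‖`, so the `O(‖p‖²)` error made by replacing `(D', B')` with `(D, B)` in the
continuous operator `D B D + τ⁻¹ D (1 - D) - σ D²` costs only part of the slack
`(σ - σ / 4) ‖D' p‖²`; the cross terms are absorbed by AM-GM.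
-/

open scoped RealInnerProductSpace Topology

section InnerProductSpace

variable {E : Type*} [NormedAddCommGroup E] [InnerProductSpace ℝ E]

noncomputable def stabilityOp (τ c : ℝ) (T B : E →L[ℝ] E) : E →L[ℝ] E :=
  T * B * T + τ⁻¹ • (T * (1 - T)) - c • (T * T)

lemma inner_stabilityOp {T : E →L[ℝ] E} (hT : T.IsSymmetric) (τ c : ℝ) (B : E →L[ℝ] E)
    (x y : E) :
    ⟪x, stabilityOp τ c T B y⟫ = ⟪T x, B (T y)⟫ + τ⁻¹ * ⟪x, T y⟫ - (τ⁻¹ + c) * ⟪T x, T y⟫ := by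
  have hT' : ∀ u v, ⟪T u, v⟫ = ⟪u, T v⟫ := hT
  simp only [stabilityOp, sub_apply, add_apply, smul_apply, mul_apply_eq_comp, one_apply_eq_self,
    map_sub, inner_sub_right, inner_add_right, real_inner_smul_right]
  rw [← hT' x (B (T y)), ← hT' x (T y)]
  ring

lemma inner_stabilityOp_self {T : E →L[ℝ] E} (hT : T.IsSymmetric) (τ c σ : ℝ) (B : E →L[ℝ] E)
    (x : E) :
    ⟪x, stabilityOp τ c T B x⟫ = ⟪x, stabilityOp τ σ T B x⟫ + (σ - c) * ‖T x‖ ^ 2 := by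
  rw [inner_stabilityOp hT, inner_stabilityOp hT, real_inner_self_eq_norm_sq]
  ring

lemma continuous_stabilityOp (τ c : ℝ) :
    Continuous fun TB : (E →L[ℝ] E) × (E →L[ℝ] E) => stabilityOp τ c TB.1 TB.2 := by
  unfold stabilityOp
  fun_prop

lemma isPositive_stabilityOp {τ c : ℝ} {T B : E →L[ℝ] E} (hT : T.IsSymmetric)
    (hB : B.IsSymmetric) (h : ∀ y, 0 ≤ ⟪y, stabilityOp τ c T B y⟫) :
    (stabilityOp τ c T B).IsPositive := by
  have hT' : ∀ u v, ⟪T u, v⟫ = ⟪u, T v⟫ := hT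
  have hB' : ∀ u v, ⟪B u, v⟫ = ⟪u, B v⟫ := hB
  refine ⟨fun x y => ?_, fun y => by
    simpa [ContinuousLinearMap.reApplyInnerSelf, real_inner_comm] using h y⟩
  simp only [ContinuousLinearMap.coe_coe]
  rw [real_inner_comm, inner_stabilityOp hT, inner_stabilityOp hT, real_inner_comm, ← hB',
    real_inner_comm (T x) y, hT' x y, real_inner_comm (T x) (T y)]

lemma ContinuousLinearMap.abs_inner_apply_le (B : E →L[ℝ] E) (u v : E) :
    |⟪u, B v⟫| ≤ ‖B‖ * ‖u‖ * ‖v‖ :=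
  calc |⟪u, B v⟫| ≤ ‖u‖ * ‖B v‖ := abs_real_inner_le_norm _ _
    _ ≤ ‖u‖ * (‖B‖ * ‖v‖) := by gcongr; exact B.le_opNorm v
    _ = ‖B‖ * ‖u‖ * ‖v‖ := by ring

lemma OrthonormalBasis.inner_eq_sum_repr_mul {ι : Type*} [Fintype ι]
    (b : OrthonormalBasis ι ℝ E) (u w : E) : ⟪u, w⟫ = ∑ i, b.repr u i * b.repr w i := by
  simp only [b.repr_apply_apply, ← b.sum_inner_mul_inner u w, real_inner_comm u]

variable [FiniteDimensional ℝ E]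

theorem ContinuousLinearMap.IsPositive.exists_spectral_split {T : E →L[ℝ] E} (hT : T.IsPositive)
    {δ : ℝ} (hδ : 0 ≤ δ) (x : E) :
    ∃ p q : E, x = p + q ∧ ⟪p, T q⟫ = 0 ∧ ⟪T p, T q⟫ = 0 ∧
      ‖T q‖ ^ 2 ≤ δ * ⟪q, T q⟫ ∧ δ ^ 2 * ‖p‖ ^ 2 ≤ ‖T p‖ ^ 2 := by
  set b := hT.isSymmetric.eigenvectorBasis rfl
  set μ := hT.isSymmetric.eigenvalues rfl
  have hμ : ∀ i, 0 ≤ μ i := hT.toLinearMap.nonneg_eigenvalues rfl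
  have hT_repr : ∀ v i, b.repr (T v) i = μ i * b.repr v i :=
    hT.isSymmetric.eigenvectorBasis_apply_self_apply rfl
  set p := b.repr.symm (WithLp.toLp 2 fun i => if δ ≤ μ i then b.repr x i else 0)
  set q := b.repr.symm (WithLp.toLp 2 fun i => if δ ≤ μ i then 0 else b.repr x i)
  have hp : ∀ i, b.repr p i = if δ ≤ μ i then b.repr x i else 0 := by simp [p]
  have hq : ∀ i, b.repr q i = if δ ≤ μ i then 0 else b.repr x i := by simp [q]
  refine ⟨p, q, b.repr.injective ?_, ?_, ?_, ?_, ?_⟩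
  · ext i
    simp only [map_add, PiLp.add_apply, hp, hq]
    split_ifs <;> simp
  all_goals
    simp only [← real_inner_self_eq_norm_sq, b.inner_eq_sum_repr_mul, Finset.mul_sum, hT_repr,
      hp, hq]
  · exact Finset.sum_eq_zero fun i _ => by split_ifs <;> simp
  · exact Finset.sum_eq_zero fun i _ => by split_ifs <;> simp
  · refine Finset.sum_le_sum fun i _ => ?_
    split_ifs with h
    · simp
    · have hμδ : 0 ≤ μ i * (δ - μ i) := mul_nonneg (hμ i) (by linarith [not_le.1 h])
      nlinarith [mul_nonneg hμδ (sq_nonneg (b.repr x i))]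
  · refine Finset.sum_le_sum fun i _ => ?_
    split_ifs with h
    · have hδμ : 0 ≤ (μ i - δ) * (δ + μ i) := mul_nonneg (by linarith) (by linarith [hμ i])
      nlinarith [mul_nonneg hδμ (sq_nonneg (b.repr x i))]
    · simp

theorem inner_stabilityOp_nonneg_of_almost_nonneg {τ σ c δ K : ℝ} {T B : E →L[ℝ] E}
    (hT : T.IsPositive) (hτ : 0 ≤ τ) (hcσ : c < σ) (hδ : 0 < δ) (hB : ‖B‖ ≤ K)
    (hδK : τ⁻¹ + c + K + 2 * K ^ 2 / (σ - c) ≤ τ⁻¹ / δ)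
    (h : ∀ p, -((σ - c) * δ ^ 2 / 2 * ‖p‖ ^ 2) ≤ ⟪p, stabilityOp τ σ T B p⟫) (x : E) :
    0 ≤ ⟪x, stabilityOp τ c T B x⟫ := by
  obtain ⟨p, q, rfl, hpq, hTpq, hq, hp⟩ := hT.exists_spectral_split hδ.le x
  have hqp : ⟪q, T p⟫ = 0 := by rw [← hT.inner_left_eq_inner_right, real_inner_comm, hpq]
  have hsc : 0 < σ - c := sub_pos.2 hcσ
  have hK : 0 ≤ K := (norm_nonneg B).trans hB
  set a := ‖T p‖
  set b := ‖T q‖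
  have hpart_p : (σ - c) / 2 * a ^ 2 ≤ ⟪p, stabilityOp τ c T B p⟫ := by
    rw [inner_stabilityOp_self hT.isSymmetric τ c σ]
    nlinarith [h p]
  have hpart_q : (τ⁻¹ / δ - τ⁻¹ - c - K) * b ^ 2 ≤ ⟪q, stabilityOp τ c T B q⟫ := by
    rw [inner_stabilityOp hT.isSymmetric, real_inner_self_eq_norm_sq]
    have hBq : -(K * b ^ 2) ≤ ⟪T q, B (T q)⟫ := by
      have := (abs_le.1 (B.abs_inner_apply_le (T q) (T q))).1
      nlinarith [sq_nonneg b]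
    have hTq : τ⁻¹ / δ * b ^ 2 ≤ τ⁻¹ * ⟪q, T q⟫ :=
      calc τ⁻¹ / δ * b ^ 2 ≤ τ⁻¹ / δ * (δ * ⟪q, T q⟫) := by gcongr
        _ = τ⁻¹ * ⟪q, T q⟫ := by field_simp
    linarith
  have hcross :
      -(2 * K * a * b) ≤ ⟪p, stabilityOp τ c T B q⟫ + ⟪q, stabilityOp τ c T B p⟫ := by
    rw [inner_stabilityOp hT.isSymmetric, inner_stabilityOp hT.isSymmetric, hpq, hqp, hTpq,
      real_inner_comm (T p), hTpq]
    have h₁ := (abs_le.1 (B.abs_inner_apply_le (T p) (T q))).1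
    have h₂ := (abs_le.1 (B.abs_inner_apply_le (T q) (T p))).1
    nlinarith [mul_nonneg (norm_nonneg (T p)) (norm_nonneg (T q))]
  have hsquare : 0 ≤ (σ - c) / 2 * a ^ 2 - 2 * K * a * b + 2 * K ^ 2 / (σ - c) * b ^ 2 := by
    have hcomplete : (σ - c) / 2 * a ^ 2 - 2 * K * a * b + 2 * K ^ 2 / (σ - c) * b ^ 2
        = (σ - c) / 2 * (a - 2 * K / (σ - c) * b) ^ 2 := by field_simp; ring
    rw [hcomplete]
    positivity
  rw [map_add, inner_add_left, inner_add_right, inner_add_right]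
  nlinarith [sq_nonneg b]

theorem eventually_inner_stabilityOp_nonneg {τ σ c : ℝ} (hτ : 0 < τ) (hcσ : c < σ)
    {T B : E →L[ℝ] E} (h : ∀ y, 0 ≤ ⟪y, stabilityOp τ σ T B y⟫) :
    ∀ᶠ TB' in 𝓝 (T, B), TB'.1.IsPositive → ∀ y, 0 ≤ ⟪y, stabilityOp τ c TB'.1 TB'.2 y⟫ := by
  set K := ‖B‖ + 1
  obtain ⟨δ, hδK, hδ⟩ := (((tendsto_inv_nhdsGT_zero.const_mul_atTop
    (inv_pos.2 hτ)).eventually_ge_atTop (τ⁻¹ + c + K + 2 * K ^ 2 / (σ - c))).and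
    self_mem_nhdsWithin).exists
  have hη : 0 < (σ - c) * δ ^ 2 / 2 := by
    have : 0 < σ - c := sub_pos.2 hcσ
    have : 0 < δ := hδ
    positivity
  have hnorm : ∀ᶠ TB' : (E →L[ℝ] E) × (E →L[ℝ] E) in 𝓝 (T, B), ‖TB'.2‖ < K :=
    (continuous_norm.comp continuous_snd).continuousAt.eventually_lt continuousAt_const
      (lt_add_one _)
  have hclose := Metric.tendsto_nhds.1
    ((continuous_stabilityOp (E := E) τ σ).tendsto (T, B)) _ hη
  filter_upwards [hnorm, hclose] with ⟨T', B'⟩ hB' hA' hT' y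
  refine inner_stabilityOp_nonneg_of_almost_nonneg hT' hτ.le hcσ hδ hB'.le hδK (fun p => ?_) y
  rw [dist_eq_norm] at hA'
  have hsplit : ⟪p, stabilityOp τ σ T' B' p⟫ = ⟪p, stabilityOp τ σ T B p⟫
      + ⟪p, (stabilityOp τ σ T' B' - stabilityOp τ σ T B) p⟫ := by
    rw [sub_apply, inner_sub_right]
    ring
  have := (abs_le.1 ((stabilityOp τ σ T' B' - stabilityOp τ σ T B).abs_inner_apply_le p p)).1
  nlinarith [h p, sq_nonneg ‖p‖]

end InnerProductSpace

open scoped ComplexOrder in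
lemma Matrix.isPositive_toEuclideanCLM_iff {𝕜 ι : Type*} [RCLike 𝕜] [Fintype ι] [DecidableEq ι]
    {A : Matrix ι ι 𝕜} :
    (Matrix.toEuclideanCLM (n := ι) (𝕜 := 𝕜) A).IsPositive ↔ A.PosSemidef := by
  rw [← ContinuousLinearMap.isPositive_toLinearMap_iff,
    Matrix.coe_toEuclideanCLM_eq_toEuclideanLin, Matrix.isPositive_toEuclideanLin_iff]

lemma Matrix.IsSymm.isSymmetric_toEuclideanCLM {ι : Type*} [Fintype ι] [DecidableEq ι]
    {A : Matrix ι ι ℝ} (hA : A.IsSymm) : (Matrix.toEuclideanCLM (𝕜 := ℝ) A).IsSymmetric := by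
  rwa [Matrix.coe_toEuclideanCLM_eq_toEuclideanLin, Matrix.isSymmetric_toEuclideanLin_iff,
    Matrix.isHermitian_iff_isSymm]

lemma stabilityOp_toEuclideanCLM {ι : Type*} [Fintype ι] [DecidableEq ι] (τ c : ℝ)
    (A B : Matrix ι ι ℝ) :
    stabilityOp τ c (Matrix.toEuclideanCLM (𝕜 := ℝ) A) (Matrix.toEuclideanCLM (𝕜 := ℝ) B) =
      Matrix.toEuclideanCLM (𝕜 := ℝ) (A * B * A + τ⁻¹ • (A * (1 - A)) - c • (A * A)) := by
  simp only [stabilityOp, map_sub, map_add, map_mul, map_smul, map_one]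

theorem stmt_12_general {n : ℕ} (τ σ : ℝ) (hτ : 0 < τ) (hσ : 0 < σ)
    (D B : Matrix (Fin n) (Fin n) ℝ)
    (hineq : (D * B * D + τ⁻¹ • (D * ((1 : Matrix (Fin n) (Fin n) ℝ) - D))
      - σ • (D * D)).PosSemidef) :
    ∃ ε₁ > (0 : ℝ), ∃ ε₂ > (0 : ℝ),
      ∀ D' B' : Matrix (Fin n) (Fin n) ℝ, D'.PosSemidef → B'.IsSymm →
        ‖Matrix.toEuclideanCLM (𝕜 := ℝ) (D' - D)‖ < ε₁ →
        ‖Matrix.toEuclideanCLM (𝕜 := ℝ) (B' - B)‖ < ε₂ →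
        (D' * B' * D' + τ⁻¹ • (D' * ((1 : Matrix (Fin n) (Fin n) ℝ) - D'))
          - (σ / 4) • (D' * D')).PosSemidef := by
  have h₀ : ∀ y, 0 ≤ ⟪y, stabilityOp τ σ (Matrix.toEuclideanCLM (𝕜 := ℝ) D)
      (Matrix.toEuclideanCLM (𝕜 := ℝ) B) y⟫ := by
    rw [stabilityOp_toEuclideanCLM]
    simpa using (Matrix.isPositive_toEuclideanCLM_iff.2 hineq).re_inner_nonneg_right
  obtain ⟨ε, hε, hball⟩ := Metric.eventually_nhds_iff.1
    (eventually_inner_stabilityOp_nonneg hτ (by linarith : σ / 4 < σ) h₀)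
  refine ⟨ε, hε, ε, hε, fun D' B' hD' hB' hD'ε hB'ε => ?_⟩
  have hT' := Matrix.isPositive_toEuclideanCLM_iff.2 hD'
  have hclose : dist (Matrix.toEuclideanCLM (𝕜 := ℝ) D', Matrix.toEuclideanCLM (𝕜 := ℝ) B')
      (Matrix.toEuclideanCLM (𝕜 := ℝ) D, Matrix.toEuclideanCLM (𝕜 := ℝ) B) < ε := by
    rw [Prod.dist_eq, dist_eq_norm, dist_eq_norm, ← map_sub, ← map_sub]
    exact max_lt hD'ε hB'ε
  rw [← Matrix.isPositive_toEuclideanCLM_iff, ← stabilityOp_toEuclideanCLM]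
  have hform := hball hclose hT'
  have hsymm := hB'.isSymmetric_toEuclideanCLM
  exact isPositive_stabilityOp hT'.isSymmetric hsymm hform

/-- the condition `DBD + τ⁻¹D(I−D) ⪰ σD²` is stable (with constant `σ/4`)
under small perturbations of `D` (among symmetric PSD matrices) and `B` (among symmetric
matrices) in the spectral norm, here expressed as the operator norm of the associated
Euclidean continuous linear map. -/
theorem stmt_12 {n : ℕ} (τ σ : ℝ) (hτ : 0 < τ) (hσ : 0 < σ)
    (D B : Matrix (Fin n) (Fin n) ℝ) (hD : D.PosSemidef) (hB : B.IsSymm)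
    (hineq : (D * B * D + τ⁻¹ • (D * ((1 : Matrix (Fin n) (Fin n) ℝ) - D))
      - σ • (D * D)).PosSemidef) :
    ∃ ε₁ > (0 : ℝ), ∃ ε₂ > (0 : ℝ),
      ∀ D' B' : Matrix (Fin n) (Fin n) ℝ, D'.PosSemidef → B'.IsSymm →
        ‖Matrix.toEuclideanCLM (𝕜 := ℝ) (D' - D)‖ < ε₁ →
        ‖Matrix.toEuclideanCLM (𝕜 := ℝ) (B' - B)‖ < ε₂ →
        (D' * B' * D' + τ⁻¹ • (D' * ((1 : Matrix (Fin n) (Fin n) ℝ) - D'))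
          - (σ / 4) • (D' * D')).PosSemidef :=
  stmt_12_general τ σ hτ hσ D B hineq
end

section
/- Let D and H be symmetric n×n matrices with D ⪰ 0, and let τ, σ > 0 be such that DHD + τ^{-1}D(I − D) ⪰ σD². Then the matrix M = HD + τ^{-1}(I − D) is invertible. -/
open Matrix


/-- if `D ⪰ 0`, `H` symmetric, and `DHD + τ⁻¹ D(I−D) ⪰ σ D²` with `σ, τ > 0`,
then `HD + τ⁻¹(I − D)` is invertible. -/
theorem stmt_13 {n : ℕ} (τ σ : ℝ) (hτ : 0 < τ) (hσ : 0 < σ)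
    (D H : Matrix (Fin n) (Fin n) ℝ) (hD : D.PosSemidef) (hH : H.IsSymm)
    (hineq : (D * H * D + τ⁻¹ • (D * ((1 : Matrix (Fin n) (Fin n) ℝ) - D))
      - σ • (D * D)).PosSemidef) :
    IsUnit (H * D + τ⁻¹ • ((1 : Matrix (Fin n) (Fin n) ℝ) - D)) := by
  set M := H * D + τ⁻¹ • ((1 : Matrix (Fin n) (Fin n) ℝ) - D) with hM
  rw [Matrix.isUnit_iff_isUnit_det, isUnit_iff_ne_zero]
  intro hdet
  obtain ⟨v, hv, hMv⟩ := (Matrix.exists_mulVec_eq_zero_iff).mpr hdet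
  have hDM : D * M = D * H * D + τ⁻¹ • (D * ((1 : Matrix (Fin n) (Fin n) ℝ) - D)) := by
    rw [hM, Matrix.mul_add, Matrix.mul_smul, ← Matrix.mul_assoc]
  have h1 : (D * H * D + τ⁻¹ • (D * ((1 : Matrix (Fin n) (Fin n) ℝ) - D))) *ᵥ v = 0 := by
    rw [← hDM, ← Matrix.mulVec_mulVec, hMv, Matrix.mulVec_zero]
  have h2 := hineq.dotProduct_mulVec_nonneg v
  rw [Matrix.sub_mulVec, h1, zero_sub] at h2
  simp only [star_trivial, dotProduct_neg, Matrix.smul_mulVec,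
    dotProduct_smul, smul_eq_mul] at h2
  have hDv : D *ᵥ v = 0 := by
    have hDT : Dᵀ = D := by simpa [Matrix.IsSymm] using hD.1
    have hexp : v ⬝ᵥ (D * D) *ᵥ v = (D *ᵥ v) ⬝ᵥ (D *ᵥ v) := by
      rw [← Matrix.mulVec_mulVec, Matrix.dotProduct_mulVec, ← Matrix.mulVec_transpose, hDT]
    have hnn : 0 ≤ (D *ᵥ v) ⬝ᵥ (D *ᵥ v) := by simpa using dotProduct_self_star_nonneg (D *ᵥ v)
    have : (D *ᵥ v) ⬝ᵥ (D *ᵥ v) = 0 := by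
      nlinarith [hexp ▸ h2]
    exact (dotProduct_self_eq_zero).1 this
  have : M *ᵥ v = τ⁻¹ • v := by
    rw [hM, Matrix.add_mulVec, Matrix.smul_mulVec, Matrix.sub_mulVec, hDv,
      ← Matrix.mulVec_mulVec, hDv, Matrix.mulVec_zero, Matrix.one_mulVec, sub_zero, zero_add]
  rw [hMv] at this
  exact hv (by
    have := this.symm
    rwa [smul_eq_zero, or_iff_right (inv_ne_zero hτ.ne')] at this)
end

section
/- Let C = {x ∈ ℝ² : x₂ ≥ (2/3)|x₁|^{3/2}} and λ̄ = (0,0). Then the outer second-order tangent set T²_C(λ̄, p) is empty for p = (1, 0) and for p = (−1, 0). -/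
/-!
If `t_k ↓ 0` and `r_k → w` with `t_k (a, 0) + (t_k² / 2) r_k` in the cusp `c |x₀|^p ≤ x₁`, dividing
the defining inequality by `t_k^p` gives `c |a + (t_k / 2) r_k,₀|^p ≤ t_k^(2 - p) r_k,₁ / 2`. For
`p < 2` the right side tends to `0` while the left side tends to `c |a|^p > 0`.
-/

/-- The outer second-order tangent set `T²_C(x, h)`: `w ∈ T²_C(x,h)` iff there are
`t_k ↓ 0` and `r^k → w` with `x + t_k h + (t_k²/2) r^k ∈ C`. -/
def secondOrderTangentSet (C : Set (Fin 2 → ℝ)) (x h : Fin 2 → ℝ) : Set (Fin 2 → ℝ) :=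
  {w | ∃ t : ℕ → ℝ, (∀ k, 0 < t k) ∧ Filter.Tendsto t Filter.atTop (nhds 0) ∧
    ∃ rs : ℕ → Fin 2 → ℝ, Filter.Tendsto rs Filter.atTop (nhds w) ∧
      ∀ k, x + t k • h + ((t k) ^ 2 / 2) • rs k ∈ C}

open Filter Topology

lemma mul_abs_add_rpow_le_rpow_sub_mul {c p t a y₀ y₁ : ℝ} (ht : 0 < t)
    (h : c * |t * a + t ^ 2 / 2 * y₀| ^ p ≤ t ^ 2 / 2 * y₁) :
    c * |a + t / 2 * y₀| ^ p ≤ t ^ (2 - p) / 2 * y₁ := by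
  have hlhs : c * |t * a + t ^ 2 / 2 * y₀| ^ p = t ^ p * (c * |a + t / 2 * y₀| ^ p) := by
    rw [show t * a + t ^ 2 / 2 * y₀ = t * (a + t / 2 * y₀) by ring, abs_mul, abs_of_pos ht,
      Real.mul_rpow ht.le (abs_nonneg _)]
    ring
  have hrhs : t ^ 2 / 2 * y₁ = t ^ p * (t ^ (2 - p) / 2 * y₁) := by
    have hsplit : t ^ p * t ^ (2 - p) = t ^ 2 := by
      rw [← Real.rpow_add ht, add_sub_cancel, Real.rpow_two]
    rw [← hsplit]
    ring
  rw [hlhs, hrhs] at h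
  exact le_of_mul_le_mul_left h (Real.rpow_pos_of_pos ht p)

theorem secondOrderTangentSet_eq_empty_of_rpow_lt_two {c p a : ℝ} (hc : 0 < c) (hp : p < 2)
    (ha : a ≠ 0) : secondOrderTangentSet {x | c * |x 0| ^ p ≤ x 1} 0 ![a, 0] = ∅ := by
  refine Set.eq_empty_of_forall_notMem fun w ⟨t, ht_pos, ht, rs, hrs, hmem⟩ => ?_
  have hscaled : ∀ k, c * |a + t k / 2 * rs k 0| ^ p ≤ t k ^ (2 - p) / 2 * rs k 1 := by
    refine fun k => mul_abs_add_rpow_le_rpow_sub_mul (ht_pos k) ?_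
    simpa only [Set.mem_ofPred_eq, Pi.add_apply, Pi.smul_apply, smul_eq_mul,
      Matrix.cons_val_zero, Matrix.cons_val_one, mul_zero, zero_add] using hmem k
  have hrs₀ := tendsto_pi_nhds.1 hrs 0
  have hrs₁ := tendsto_pi_nhds.1 hrs 1
  have hlhs : Tendsto (fun k => c * |a + t k / 2 * rs k 0| ^ p) atTop (𝓝 (c * |a| ^ p)) := by
    have hinner : Tendsto (fun k => a + t k / 2 * rs k 0) atTop (𝓝 a) := by
      simpa using tendsto_const_nhds.add ((ht.div_const 2).mul hrs₀)
    exact (hinner.abs.rpow_const (p := p) (Or.inl (abs_ne_zero.2 ha))).const_mul c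
  have hrhs : Tendsto (fun k => t k ^ (2 - p) / 2 * rs k 1) atTop (𝓝 0) := by
    have := ((ht.rpow_const (Or.inr (sub_nonneg.2 hp.le))).div_const 2).mul hrs₁
    simpa [Real.zero_rpow (by linarith : 2 - p ≠ 0)] using this
  have hpos : 0 < c * |a| ^ p := mul_pos hc (Real.rpow_pos_of_pos (abs_pos.2 ha) p)
  exact hpos.not_ge (le_of_tendsto_of_tendsto' hlhs hrhs hscaled)

/-- for `C = {x : x₂ ≥ (2/3)|x₁|^{3/2}}` and `λ̄ = (0,0)`, the outer
second-order tangent sets in the directions `(1,0)` and `(−1,0)` are empty. -/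
theorem stmt_17 :
    secondOrderTangentSet {x : Fin 2 → ℝ | (2 / 3) * |x 0| ^ ((3 : ℝ) / 2) ≤ x 1} 0 ![1, 0] = ∅ ∧
    secondOrderTangentSet {x : Fin 2 → ℝ | (2 / 3) * |x 0| ^ ((3 : ℝ) / 2) ≤ x 1} 0 ![-1, 0] = ∅ := by
  constructor <;>
    exact secondOrderTangentSet_eq_empty_of_rpow_lt_two (by norm_num) (by norm_num) (by norm_num)
end
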